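/- Let t ≥ 4 be an even integer and k ≥ 1 an odd integer. Then the radio k-labeling number of the infinite distance graph D(1,t) satisfies rl_k(D(1,t)) ≤ (t/2)k². -/

import Mathlib

/-!
Write `t = 2s` and `k = 2h + 1`, and label `x` by its residue `a` modulo `N = tk + 1`: residues
`a ≤ sk` get `ak`, the others `h + (a - sk - 1)k`. A walk of length `ℓ` from `x` to `y` writes
`x - y = u + vt` with `|u| + |v| ≤ ℓ`, so it suffices that `k + 1 ≤ |c x - c y| + |u| + |v|`.
Labels in the same block differ by a multiple of `k`, and equal labels force `N ∣ x - y`, hence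
`|u| + |v| ≥ k + 1`. Labels in different blocks differ by `dk - h`, which is below `k` only for
`d ∈ {0, 1}`; then `x - y ≡ ±sk (mod N)`, and since `s ≥ 2` these residues are at distance at
least `h + 2` from `0` in `D(1,t)`.
-/

/-- The infinite distance graph on `ℤ` with distance set `D`: distinct integers
`i, j` are adjacent iff `|i - j| ∈ D`. -/
def distGraph (D : Set ℤ) : SimpleGraph ℤ where
  Adj i j := i ≠ j ∧ |i - j| ∈ D
  symm := by
    constructor
    intro i j h
    exact ⟨h.1.symm, by rw [abs_sub_comm]; exact h.2⟩
  loopless := by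
    constructor
    intro i h
    exact h.1 rfl

/-- `c : ℤ → ℕ` is a radio `k`-labeling of the graph `G` on `ℤ`:
`|c(u) - c(v)| ≥ k + 1 - d(u,v)` for all distinct `u, v`. -/
def IsRadioLabeling (G : SimpleGraph ℤ) (k : ℕ) (c : ℤ → ℕ) : Prop :=
  ∀ x y : ℤ, x ≠ y → (k : ℤ) + 1 - G.dist x y ≤ |(c x : ℤ) - c y|

open SimpleGraph

lemma hasse_le_distGraph (t : ℤ) : hasse ℤ ≤ distGraph {1, t} := by
  intro x y hxy
  rcases hxy with h | h <;> rw [Order.covBy_iff_add_one_eq] at h <;> subst h <;>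
    exact ⟨by omega, by simp⟩

lemma distGraph_reachable (t x y : ℤ) : (distGraph {1, t}).Reachable x y :=
  (hasse_preconnected_of_succ ℤ x y).mono (hasse_le_distGraph t)

lemma exists_sub_eq_of_adj {t x y : ℤ} (h : (distGraph {1, t}).Adj x y) :
    ∃ u v : ℤ, x - y = u + v * t ∧ |u| + |v| ≤ 1 := by
  obtain ⟨-, h1 | (ht : |x - y| = t)⟩ := h
  · exact ⟨x - y, 0, by ring, by simp [h1]⟩
  · rcases abs_choice (x - y) with h | h
    · exact ⟨0, 1, by linarith, by simp⟩
    · exact ⟨0, -1, by linarith, by simp⟩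

lemma exists_sub_eq_of_walk {t x y : ℤ} (w : (distGraph {1, t}).Walk x y) :
    ∃ u v : ℤ, x - y = u + v * t ∧ |u| + |v| ≤ w.length := by
  induction w with
  | nil => exact ⟨0, 0, by simp, by simp⟩
  | cons hadj _ ih =>
    obtain ⟨u, v, huv, hl⟩ := ih
    obtain ⟨u', v', huv', hl'⟩ := exists_sub_eq_of_adj hadj
    refine ⟨u' + u, v' + v, by linear_combination huv + huv', ?_⟩
    rw [Walk.length_cons]
    push_cast
    linarith [abs_add_le u' u, abs_add_le v' v]

lemma exists_sub_eq_of_dist (t x y : ℤ) :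
    ∃ u v : ℤ, x - y = u + v * t ∧ |u| + |v| ≤ (distGraph {1, t}).dist x y := by
  obtain ⟨w, hw⟩ := (distGraph_reachable t x y).exists_walk_length_eq_dist
  rw [← hw]
  exact exists_sub_eq_of_walk w

lemma isRadioLabeling_distGraph_of_forall {t : ℤ} {k : ℕ} {c : ℤ → ℕ}
    (hc : ∀ x y u v : ℤ, x ≠ y → x - y = u + v * t →
      (k : ℤ) + 1 ≤ |(c x : ℤ) - c y| + |u| + |v|) :
    IsRadioLabeling (distGraph {1, t}) k c := by
  intro x y hxy
  obtain ⟨u, v, huv, hl⟩ := exists_sub_eq_of_dist t x y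
  linarith [hc x y u v hxy huv]

lemma one_le_abs_add_abs_of_add_mul_ne_zero {u v t : ℤ} (h : u + v * t ≠ 0) :
    1 ≤ |u| + |v| := by
  rcases eq_or_ne u 0 with rfl | hu
  · have hv : v ≠ 0 := by rintro rfl; simp at h
    linarith [Int.one_le_abs hv, abs_nonneg (0 : ℤ)]
  · linarith [Int.one_le_abs hu, abs_nonneg v]

lemma abs_add_mul_le {t : ℤ} (ht : 1 ≤ t) (u v : ℤ) : |u + v * t| ≤ (|u| + |v|) * t := by
  calc |u + v * t| ≤ |u| + |v| * t := by
        rw [← abs_of_pos (by omega : 0 < t), ← abs_mul, abs_of_pos (by omega : 0 < t)]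
        exact abs_add_le _ _
    _ ≤ (|u| + |v|) * t := by nlinarith [abs_nonneg u]

/-- One direction of the distance formula of `D(1,t)`. -/
lemma min_le_abs_add_abs {t q r u v : ℤ} (ht : 1 ≤ t) (h : u + v * t = q * t + r) :
    min (q + r) (q + 1 + t - r) ≤ |u| + |v| := by
  have hu : u = (q - v) * t + r := by linarith
  have hv := le_abs_self v
  rcases le_or_gt 0 (q - v) with hw | hw
  · have : q - v ≤ (q - v) * t := le_mul_of_one_le_right hw ht
    exact min_le_of_left_le (by linarith [le_abs_self u])
  · have : 0 ≤ (v - q - 1) * (t + 1) := mul_nonneg (by omega) (by omega)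
    exact min_le_of_right_le (by nlinarith [neg_le_abs u])

section RadioCondition

variable {s u v : ℤ}

lemma add_two_le_abs_add_abs_of_modEq {h : ℤ} (hs : 2 ≤ s) (hh : 0 ≤ h)
    (hz : u + v * (2 * s) ≡ s * (2 * h + 1) [ZMOD 2 * s * (2 * h + 1) + 1]) :
    h + 2 ≤ |u| + |v| := by
  have hfar : 3 * s * (2 * h + 1) + 1 ≤ |u + v * (2 * s)| → h + 2 ≤ |u| + |v| := fun _ => by
    nlinarith [abs_add_mul_le (by omega : 1 ≤ 2 * s) u v]
  have hN : 0 ≤ 2 * s * (2 * h + 1) + 1 := by positivity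
  obtain ⟨m, hm⟩ := Int.modEq_iff_dvd.1 hz
  -- With `K = 2h + 1`, the only representatives of `sK` of absolute value at most `3sK` are `sK`
  -- and `-(sK + 1)`, both at distance `h + s` from `0`.
  rcases (by omega : m ≤ -1 ∨ m = 0 ∨ m = 1 ∨ 2 ≤ m) with hm' | rfl | rfl | hm'
  · have := mul_le_mul_of_nonneg_left hm' hN
    exact hfar (le_abs.2 (Or.inl (by linarith)))
  · have := min_le_abs_add_abs (u := u) (v := v) (t := 2 * s) (q := h) (r := s)
      (by omega) (by linarith)
    omega
  · have := min_le_abs_add_abs (u := -u) (v := -v) (t := 2 * s) (q := h) (r := s + 1)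
      (by omega) (by linarith)
    rw [abs_neg, abs_neg] at this
    omega
  · have := mul_le_mul_of_nonneg_left hm' hN
    exact hfar (le_abs.2 (Or.inr (by linarith)))

lemma radio_condition_of_same_block {a b k : ℤ} (hs : 0 < s) (hk : 0 ≤ k)
    (hz0 : u + v * (2 * s) ≠ 0) (hz : u + v * (2 * s) ≡ a - b [ZMOD 2 * s * k + 1]) :
    k + 1 ≤ |(a - b) * k| + |u| + |v| := by
  have hL := one_le_abs_add_abs_of_add_mul_ne_zero hz0
  rcases eq_or_ne a b with rfl | hab
  · rw [sub_self] at hz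
    have hN : 2 * s * k + 1 ≤ |u + v * (2 * s)| :=
      Int.le_of_dvd (abs_pos.2 hz0) ((dvd_abs _ _).2 (Int.modEq_zero_iff_dvd.1 hz))
    have := abs_add_mul_le (by omega : 1 ≤ 2 * s) u v
    simp only [sub_self, zero_mul, abs_zero, zero_add]
    nlinarith
  · have : k ≤ |(a - b) * k| := by
      rw [abs_mul, abs_of_nonneg hk]
      exact le_mul_of_one_le_left hk (Int.one_le_abs (sub_ne_zero.2 hab))
    omega

lemma radio_condition_of_cross_block {a b h : ℤ} (hs : 2 ≤ s) (hh : 0 ≤ h)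
    (hz0 : u + v * (2 * s) ≠ 0)
    (hz : u + v * (2 * s) ≡ a - b [ZMOD 2 * s * (2 * h + 1) + 1]) :
    2 * h + 1 + 1 ≤ |(a - b + s * (2 * h + 1) + 1) * (2 * h + 1) - h| + |u| + |v| := by
  have hL := one_le_abs_add_abs_of_add_mul_ne_zero hz0
  obtain ⟨m, hm⟩ := Int.modEq_iff_dvd.1 hz
  generalize hd : a - b + s * (2 * h + 1) + 1 = d
  rcases (by omega : d ≤ -1 ∨ d = 0 ∨ d = 1 ∨ 2 ≤ d) with hd' | rfl | rfl | hd'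
  · have : 2 * h + 1 ≤ |d * (2 * h + 1) - h| := le_abs.2 (Or.inr (by nlinarith))
    omega
  · have := add_two_le_abs_add_abs_of_modEq (u := u) (v := v) (h := h) hs hh
      (Int.modEq_iff_dvd.2 ⟨m + 1, by linear_combination hm - hd⟩)
    rw [zero_mul, zero_sub, abs_neg, abs_of_nonneg hh]
    omega
  · have := add_two_le_abs_add_abs_of_modEq (u := -u) (v := -v) (h := h) hs hh
      (Int.modEq_iff_dvd.2 ⟨-m, by linear_combination hd - hm⟩)
    rw [abs_neg, abs_neg] at this
    rw [one_mul, abs_of_nonneg (by omega)]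
    omega
  · have : 2 * h + 1 + 1 ≤ |d * (2 * h + 1) - h| := le_abs.2 (Or.inl (by nlinarith))
    omega

end RadioCondition

/-- The labeling of the paper for `t = 2 * s`: the residue `a` of `x` modulo `t * k + 1` plays the
role of the position `a + 1`. -/
def pairLabel (s k x : ℤ) : ℤ :=
  if x % (2 * s * k + 1) ≤ s * k then x % (2 * s * k + 1) * k
  else (k - 1) / 2 + (x % (2 * s * k + 1) - (s * k + 1)) * k

section pairLabel

variable {s k : ℤ}

lemma pairLabel_nonneg (hs : 0 ≤ s) (hk : 0 < k) (x : ℤ) : 0 ≤ pairLabel s k x := by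
  have ha := Int.emod_nonneg x (by positivity : 2 * s * k + 1 ≠ 0)
  unfold pairLabel
  split_ifs with hlow
  · positivity
  · have : 0 ≤ (k - 1) / 2 := by omega
    have : 0 ≤ x % (2 * s * k + 1) - (s * k + 1) := by omega
    positivity

lemma pairLabel_le (hs : 0 ≤ s) (hk : 0 < k) (x : ℤ) : pairLabel s k x ≤ s * k ^ 2 := by
  have ha := Int.emod_lt_of_pos x (by positivity : 0 < 2 * s * k + 1)
  unfold pairLabel
  split_ifs with hlow
  · nlinarith
  · have : (k - 1) / 2 ≤ k := by omega
    nlinarith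

lemma pairLabel_radio_condition (hs : 2 ≤ s) (hk : 0 < k) (hko : Odd k) {x y u v : ℤ}
    (hxy : x ≠ y) (huv : x - y = u + v * (2 * s)) :
    k + 1 ≤ |pairLabel s k x - pairLabel s k y| + |u| + |v| := by
  obtain ⟨h, rfl⟩ := hko
  have hh : 0 ≤ h := by omega
  have hz0 : u + v * (2 * s) ≠ 0 := huv ▸ sub_ne_zero.2 hxy
  have hz0' : -u + -v * (2 * s) ≠ 0 := by rwa [neg_mul, ← neg_add, neg_ne_zero]
  unfold pairLabel
  rw [show (2 * h + 1 - 1) / 2 = h by omega]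
  set N := 2 * s * (2 * h + 1) + 1
  set a := x % N
  set b := y % N
  have hz : u + v * (2 * s) ≡ a - b [ZMOD N] :=
    huv ▸ ((Int.mod_modEq x N).sub (Int.mod_modEq y N)).symm
  have hz' : -u + -v * (2 * s) ≡ b - a [ZMOD N] := by
    rw [neg_mul, ← neg_add, ← neg_sub]
    exact hz.neg
  split_ifs
  · rw [← sub_mul]
    exact radio_condition_of_same_block (by omega) (by omega) hz0 hz
  · rw [show a * (2 * h + 1) - (h + (b - (s * (2 * h + 1) + 1)) * (2 * h + 1)) =
      (a - b + s * (2 * h + 1) + 1) * (2 * h + 1) - h by ring]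
    exact radio_condition_of_cross_block hs hh hz0 hz
  · rw [abs_sub_comm, show b * (2 * h + 1) - (h + (a - (s * (2 * h + 1) + 1)) * (2 * h + 1)) =
      (b - a + s * (2 * h + 1) + 1) * (2 * h + 1) - h by ring]
    simpa only [abs_neg] using radio_condition_of_cross_block hs hh hz0' hz'
  · rw [show h + (a - (s * (2 * h + 1) + 1)) * (2 * h + 1) -
      (h + (b - (s * (2 * h + 1) + 1)) * (2 * h + 1)) = (a - b) * (2 * h + 1) by ring]
    exact radio_condition_of_same_block (by omega) (by omega) hz0 hz

end pairLabel

theorem radio_upper_D1t_pair_even_general (t k : ℕ) (ht : 4 ≤ t) (hte : Even t)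
    (hko : Odd k) :
    ∃ c : ℤ → ℕ, IsRadioLabeling (distGraph {1, (t : ℤ)}) k c ∧
      ∀ x : ℤ, (c x : ℝ) ≤ ((t : ℝ) / 2) * (k : ℝ) ^ 2 := by
  obtain ⟨s, rfl⟩ := hte
  have hs : (2 : ℤ) ≤ s := by omega
  have hk : (0 : ℤ) < k := by exact_mod_cast hko.pos
  have hko' : Odd (k : ℤ) := by exact_mod_cast hko
  refine ⟨fun x => (pairLabel s k x).toNat, ?_, fun x => ?_⟩
  · refine isRadioLabeling_distGraph_of_forall fun x y u v hxy huv => ?_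
    rw [Int.toNat_of_nonneg (pairLabel_nonneg (by omega) hk x),
      Int.toNat_of_nonneg (pairLabel_nonneg (by omega) hk y)]
    exact pairLabel_radio_condition hs hk hko' hxy (by rw [huv]; push_cast; ring)
  · have : (pairLabel s k x).toNat ≤ s * k ^ 2 :=
      Int.toNat_le.2 (by exact_mod_cast pairLabel_le (by omega) hk x)
    calc ((pairLabel s k x).toNat : ℝ) ≤ (s * k ^ 2 : ℕ) := by exact_mod_cast this
      _ = _ := by push_cast; ring

/-- For even `t ≥ 4` and odd `k ≥ 1`, `rl_k(D(1,t)) ≤ (t/2)k²`. -/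
theorem radio_upper_D1t_pair_even (t k : ℕ) (ht : 4 ≤ t) (hte : Even t)
    (hk : 1 ≤ k) (hko : Odd k) :
    ∃ c : ℤ → ℕ, IsRadioLabeling (distGraph {1, (t : ℤ)}) k c ∧
      ∀ x : ℤ, (c x : ℝ) ≤ ((t : ℝ) / 2) * (k : ℝ) ^ 2 :=
  radio_upper_D1t_pair_even_general t k ht hte hko
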